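/- Suppose h21 ≥ 2M·h22 (very strong cross link) and h11/h22 ≤ √p2/√p1. Then the maximum of f(w1,w2) over the feasible box 0 < w1 ≤ W1, 0 < w2 ≤ W2 equals h11·W1, and it is attained at (w1,w2) = ( W1 , (h11/h22)·W1 ). -/
import Mathlib


/-- The minimum Euclidean half-distance at receiver 1: the minimum of
`|h11*w1*n - h21*w2*m|` over integer pairs `(m,n) != (0,0)` with
`|m| <= M-1` and `|n| <= M-1`. -/
noncomputable def minDist1 (M : ℕ) (h11 h21 w1 w2 : ℝ) : ℝ :=
  sInf {d : ℝ | ∃ m n : ℤ, (m, n) ≠ (0, 0) ∧ |m| ≤ (M : ℤ) - 1 ∧ |n| ≤ (M : ℤ) - 1 ∧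
      d = |h11 * w1 * n - h21 * w2 * m|}

/-- The smaller of the two receivers' minimum Euclidean half-distances. -/
noncomputable def f (M : ℕ) (h11 h21 h22 w1 w2 : ℝ) : ℝ :=
  min (minDist1 M h11 h21 w1 w2) (h22 * w2)

lemma minDist1_bdd (M : ℕ) (h11 h21 w1 w2 : ℝ) :
    BddBelow {d : ℝ | ∃ m n : ℤ, (m, n) ≠ (0, 0) ∧ |m| ≤ (M : ℤ) - 1 ∧ |n| ≤ (M : ℤ) - 1 ∧
      d = |h11 * w1 * n - h21 * w2 * m|} :=
  ⟨0, by rintro d ⟨m, n, -, -, -, rfl⟩; exact abs_nonneg _⟩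

lemma minDist1_mem (M : ℕ) (hM : 2 ≤ M) (h11 h21 w1 w2 : ℝ) (h11p : 0 < h11) (hw1 : 0 < w1) :
    h11 * w1 ∈ {d : ℝ | ∃ m n : ℤ, (m, n) ≠ (0, 0) ∧ |m| ≤ (M : ℤ) - 1 ∧ |n| ≤ (M : ℤ) - 1 ∧
      d = |h11 * w1 * n - h21 * w2 * m|} := by
  refine ⟨0, 1, by decide, ?_, ?_, ?_⟩
  · simp; omega
  · simp; omega
  · push_cast
    rw [mul_one, mul_zero, sub_zero, abs_of_pos (mul_pos h11p hw1)]

lemma minDist1_le (M : ℕ) (hM : 2 ≤ M) (h11 h21 w1 w2 : ℝ) (h11p : 0 < h11) (hw1 : 0 < w1) :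
    minDist1 M h11 h21 w1 w2 ≤ h11 * w1 :=
  csInf_le (minDist1_bdd M h11 h21 w1 w2) (minDist1_mem M hM h11 h21 w1 w2 h11p hw1)

/-- Very strong cross link (`h21 ≥ 2M·h22`) with `h11/h22 ≤ √p2/√p1`: the
maximum of `f` over the feasible box equals `h11·W1`, attained at
`(W1, (h11/h22)·W1)`. -/
theorem very_strong_cross_link_case1 (M : ℕ) (hM : 2 ≤ M) (hMe : Even M)
    (h11 h21 h22 p1 p2 : ℝ)
    (h11p : 0 < h11) (h21p : 0 < h21) (h22p : 0 < h22)
    (hp1 : 0 < p1) (hp2 : 0 < p2)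
    (W1 W2 : ℝ)
    (hW1 : W1 = Real.sqrt (3 * p1 / ((M : ℝ) ^ 2 - 1)))
    (hW2 : W2 = Real.sqrt (3 * p2 / ((M : ℝ) ^ 2 - 1)))
    (hvstrong : 2 * (M : ℝ) * h22 ≤ h21)
    (hratio : h11 / h22 ≤ Real.sqrt p2 / Real.sqrt p1) :
    IsGreatest {v : ℝ | ∃ w1 w2 : ℝ, 0 < w1 ∧ w1 ≤ W1 ∧ 0 < w2 ∧ w2 ≤ W2 ∧
        v = f M h11 h21 h22 w1 w2} (h11 * W1) ∧
    ((0 : ℝ) < W1 ∧ W1 ≤ W1 ∧ 0 < h11 / h22 * W1 ∧ h11 / h22 * W1 ≤ W2) ∧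
    f M h11 h21 h22 W1 (h11 / h22 * W1) = h11 * W1 := by
  have hM2 : (2 : ℝ) ≤ (M : ℝ) := by exact_mod_cast hM
  have hMsq : (0 : ℝ) < (M : ℝ) ^ 2 - 1 := by nlinarith
  have hdpos : (0 : ℝ) < 3 / ((M : ℝ) ^ 2 - 1) := div_pos (by norm_num) hMsq
  set c := Real.sqrt (3 / ((M : ℝ) ^ 2 - 1)) with hcdef
  have hcpos : 0 < c := Real.sqrt_pos.mpr hdpos
  have hsp1 : 0 < Real.sqrt p1 := Real.sqrt_pos.mpr hp1
  have hsp2 : 0 < Real.sqrt p2 := Real.sqrt_pos.mpr hp2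
  have hW1c : W1 = c * Real.sqrt p1 := by
    rw [hW1, show 3 * p1 / ((M : ℝ) ^ 2 - 1) = (3 / ((M : ℝ) ^ 2 - 1)) * p1 by ring,
      Real.sqrt_mul hdpos.le]
  have hW2c : W2 = c * Real.sqrt p2 := by
    rw [hW2, show 3 * p2 / ((M : ℝ) ^ 2 - 1) = (3 / ((M : ℝ) ^ 2 - 1)) * p2 by ring,
      Real.sqrt_mul hdpos.le]
  have hW1pos : 0 < W1 := hW1c ▸ mul_pos hcpos hsp1
  set w2s := h11 / h22 * W1 with hw2sdef
  have hw2pos : 0 < w2s := mul_pos (div_pos h11p h22p) hW1pos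
  have hw2W2 : w2s ≤ W2 := by
    rw [hw2sdef, hW1c, hW2c]
    have h1 : h11 / h22 * Real.sqrt p1 ≤ Real.sqrt p2 / Real.sqrt p1 * Real.sqrt p1 :=
      mul_le_mul_of_nonneg_right hratio hsp1.le
    rw [div_mul_cancel₀ _ hsp1.ne'] at h1
    calc h11 / h22 * (c * Real.sqrt p1) = (h11 / h22 * Real.sqrt p1) * c := by ring
      _ ≤ Real.sqrt p2 * c := mul_le_mul_of_nonneg_right h1 hcpos.le
      _ = c * Real.sqrt p2 := by ring
  have key1 : h22 * w2s = h11 * W1 := by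
    rw [hw2sdef]; field_simp
  -- lower bound on minDist1 at the optimal point
  have hlow : ∀ d ∈ {d : ℝ | ∃ m n : ℤ, (m, n) ≠ (0, 0) ∧ |m| ≤ (M : ℤ) - 1 ∧
      |n| ≤ (M : ℤ) - 1 ∧ d = |h11 * W1 * n - h21 * w2s * m|}, h11 * W1 ≤ d := by
    rintro d ⟨m, n, hmn, hm, hn, rfl⟩
    have hnb : |(n : ℝ)| ≤ (M : ℝ) - 1 := by exact_mod_cast hn
    by_cases hm0 : m = 0
    · have hn0 : n ≠ 0 := by
        rintro h; exact hmn (by rw [hm0, h])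
      have h1n : (1 : ℝ) ≤ |(n : ℝ)| := by exact_mod_cast Int.one_le_abs hn0
      rw [hm0]
      push_cast
      rw [mul_zero, sub_zero, abs_mul, abs_of_pos (mul_pos h11p hW1pos)]
      nlinarith [mul_pos h11p hW1pos]
    · have h1m : (1 : ℝ) ≤ |(m : ℝ)| := by exact_mod_cast Int.one_le_abs hm0
      have habs : |h21 * w2s * m| - |h11 * W1 * n| ≤ |h11 * W1 * (n : ℝ) - h21 * w2s * m| := by
        rw [abs_sub_comm]
        exact abs_sub_abs_le_abs_sub _ _
      have e1 : |h21 * w2s * (m : ℝ)| = h21 * w2s * |(m : ℝ)| := by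
        rw [abs_mul, abs_of_pos (mul_pos h21p hw2pos)]
      have e2 : |h11 * W1 * (n : ℝ)| = h11 * W1 * |(n : ℝ)| := by
        rw [abs_mul, abs_of_pos (mul_pos h11p hW1pos)]
      have h3 : 2 * (M : ℝ) * h22 * w2s ≤ h21 * w2s :=
        mul_le_mul_of_nonneg_right hvstrong hw2pos.le
      have h4 : 2 * (M : ℝ) * (h22 * w2s) = 2 * (M : ℝ) * (h11 * W1) := by rw [key1]
      have h5 : 0 ≤ ((M : ℝ) - 2) * (h11 * W1) :=
        mul_nonneg (by linarith) (mul_pos h11p hW1pos).le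
      nlinarith [mul_pos h11p hW1pos, mul_pos h21p hw2pos,
        mul_le_mul_of_nonneg_left hnb (mul_pos h11p hW1pos).le,
        mul_le_mul_of_nonneg_left h1m (mul_pos h21p hw2pos).le]
  have hmd : minDist1 M h11 h21 W1 w2s = h11 * W1 := by
    refine le_antisymm (minDist1_le M hM h11 h21 W1 w2s h11p hW1pos) ?_
    exact le_csInf ⟨_, minDist1_mem M hM h11 h21 W1 w2s h11p hW1pos⟩ hlow
  have hfval : f M h11 h21 h22 W1 w2s = h11 * W1 := by
    rw [f, hmd, key1, min_self]
  refine ⟨⟨⟨W1, w2s, hW1pos, le_refl _, hw2pos, hw2W2, hfval.symm⟩, ?_⟩,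
    ⟨hW1pos, le_refl _, hw2pos, hw2W2⟩, hfval⟩
  rintro v ⟨w1, w2, hw1, hw1W, hw2, hw2W, rfl⟩
  calc f M h11 h21 h22 w1 w2 ≤ minDist1 M h11 h21 w1 w2 := min_le_left _ _
    _ ≤ h11 * w1 := minDist1_le M hM h11 h21 w1 w2 h11p hw1
    _ ≤ h11 * W1 := mul_le_mul_of_nonneg_left hw1W h11p.le
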